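/- arXiv:2510.24248 — 3 statements merged into one kernel-verified Lean document; each statement's English description precedes it below -/
import Mathlib

section
/- For pairwise distinct complex numbers λ₁, λ₂, λ₃ with λ₁ + λ₂ + λ₃ = −3/2 (the case of a three-character theory with vanishing Wronskian index), the diagonal entries y_{ii} := 1728·λᵢ(λᵢ + 1/3)(λᵢ + 2/3)/∏_{j≠i}(λᵢ − λⱼ) − 744·λᵢ satisfy y₁₁ + y₂₂ + y₃₃ = 252. -/
/-!
The trace is `1728 · [λ₁, λ₂, λ₃] f − 744 (λ₁ + λ₂ + λ₃)` with `f(λ) = λ (λ + 1/3) (λ + 2/3)`,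
where `[λ₁, λ₂, λ₃] f = ∑ f(λᵢ) / ∏_{j ≠ i} (λᵢ − λⱼ)` is the second divided difference.
For the cubic `λ³ + λ² + 2λ/9` it equals `λ₁ + λ₂ + λ₃ + 1`, so the trace is
`984 (λ₁ + λ₂ + λ₃) + 1728 = 252`.
-/

theorem divided_difference_cubic {K : Type*} [Field K] {a b c : K}
    (hab : a ≠ b) (hac : a ≠ c) (hbc : b ≠ c) (u p q r : K) :
    (u * a ^ 3 + p * a ^ 2 + q * a + r) / ((a - b) * (a - c)) +
      (u * b ^ 3 + p * b ^ 2 + q * b + r) / ((b - a) * (b - c)) +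
      (u * c ^ 3 + p * c ^ 2 + q * c + r) / ((c - a) * (c - b)) =
      u * (a + b + c) + p := by
  have hab' : a - b ≠ 0 := sub_ne_zero.mpr hab
  have hac' : a - c ≠ 0 := sub_ne_zero.mpr hac
  have hbc' : b - c ≠ 0 := sub_ne_zero.mpr hbc
  have hba' : b - a ≠ 0 := sub_ne_zero.mpr hab.symm
  have hca' : c - a ≠ 0 := sub_ne_zero.mpr hac.symm
  have hcb' : c - b ≠ 0 := sub_ne_zero.mpr hbc.symm
  field_simp
  ring

theorem trace_Y_wronskian_zero (l1 l2 l3 : ℂ)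
    (h12 : l1 ≠ l2) (h13 : l1 ≠ l3) (h23 : l2 ≠ l3)
    (hsum : l1 + l2 + l3 = -(3/2)) :
    (1728 * (l1 * (l1 + 1/3) * (l1 + 2/3)) / ((l1 - l2) * (l1 - l3)) - 744 * l1) +
    (1728 * (l2 * (l2 + 1/3) * (l2 + 2/3)) / ((l2 - l1) * (l2 - l3)) - 744 * l2) +
    (1728 * (l3 * (l3 + 1/3) * (l3 + 2/3)) / ((l3 - l1) * (l3 - l2)) - 744 * l3) =
      252 := by
  have hdd := divided_difference_cubic h12 h13 h23 1728 1728 384 0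
  calc _ = 1728 * (l1 + l2 + l3) + 1728 - 744 * (l1 + l2 + l3) := by
        rw [← hdd]; ring
    _ = 252 := by rw [hsum]; norm_num
end

section
/- The real 3×3 matrix S = (2/√7)·[[sin(π/7), cos(π/14), cos(3π/14)], [cos(π/14), −cos(3π/14), sin(π/7)], [cos(3π/14), sin(π/7), −cos(π/14)]] satisfies S² = I. -/
open Real

lemma cos_pi_div_fourteen_poly :
    64 * Real.cos (Real.pi/14) ^ 6 - 112 * Real.cos (Real.pi/14) ^ 4 +
      56 * Real.cos (Real.pi/14) ^ 2 - 7 = 0 := by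
  set c := Real.cos (Real.pi/14) with hcdef
  set s := Real.sin (Real.pi/14) with hsdef
  have h1 : s ^ 2 + c ^ 2 = 1 := Real.sin_sq_add_cos_sq _
  have hc3 : Real.cos (3 * (Real.pi/14)) = 4 * c ^ 3 - 3 * c := by
    rw [Real.cos_three_mul]
  have hs3 : Real.sin (3 * (Real.pi/14)) = 3 * s - 4 * s ^ 3 := by
    rw [Real.sin_three_mul]
  have hc6 : Real.cos (6 * (Real.pi/14)) = 2 * (4 * c ^ 3 - 3 * c) ^ 2 - 1 := by
    rw [show (6 : ℝ) * (Real.pi/14) = 2 * (3 * (Real.pi/14)) by ring,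
      Real.cos_two_mul, hc3]
  have hs6 : Real.sin (6 * (Real.pi/14)) =
      2 * (3 * s - 4 * s ^ 3) * (4 * c ^ 3 - 3 * c) := by
    rw [show (6 : ℝ) * (Real.pi/14) = 2 * (3 * (Real.pi/14)) by ring,
      Real.sin_two_mul, hs3, hc3]
  have h7 : Real.cos (Real.pi/14 + 6 * (Real.pi/14)) = 0 := by
    rw [show Real.pi/14 + 6 * (Real.pi/14) = Real.pi/2 by ring, Real.cos_pi_div_two]
  rw [Real.cos_add, hc6, hs6, ← hcdef, ← hsdef] at h7
  have hkey : c * (64 * c ^ 6 - 112 * c ^ 4 + 56 * c ^ 2 - 7) = 0 := by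
    linear_combination h7 +
      ((24 * c - 32 * c ^ 3) * s ^ 2 + 32 * c ^ 5 - 32 * c ^ 3 + 6 * c) * h1
  have hcpos : 0 < c := by
    apply Real.cos_pos_of_mem_Ioo
    constructor
    · nlinarith [Real.pi_pos]
    · nlinarith [Real.pi_pos]
  rcases mul_eq_zero.mp hkey with h | h
  · exact absurd h hcpos.ne'
  · exact h

lemma sin_pi_div_fourteen_poly :
    Real.sin (Real.pi/14) = 32 * Real.cos (Real.pi/14) ^ 6
      - 48 * Real.cos (Real.pi/14) ^ 4 + 18 * Real.cos (Real.pi/14) ^ 2 - 1 := by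
  have h : Real.sin (Real.pi/14) = Real.cos (Real.pi/2 - Real.pi/14) := by
    rw [Real.cos_pi_div_two_sub]
  rw [h, show Real.pi/2 - Real.pi/14 = 2 * (3 * (Real.pi/14)) by ring,
    Real.cos_two_mul, Real.cos_three_mul]
  ring

theorem seven_theories_S_matrix_squares_to_one :
    let S : Matrix (Fin 3) (Fin 3) ℝ :=
      (2/Real.sqrt 7) • !![Real.sin (Real.pi/7), Real.cos (Real.pi/14), Real.cos (3*Real.pi/14);
        Real.cos (Real.pi/14), -Real.cos (3*Real.pi/14), Real.sin (Real.pi/7);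
        Real.cos (3*Real.pi/14), Real.sin (Real.pi/7), -Real.cos (Real.pi/14)]
    S * S = 1 := by
  intro S
  have hp := cos_pi_div_fourteen_poly
  set c := Real.cos (Real.pi/14) with hcdef
  have hA : Real.sin (Real.pi/7) =
      2 * (32 * c ^ 6 - 48 * c ^ 4 + 18 * c ^ 2 - 1) * c := by
    rw [show Real.pi/7 = 2 * (Real.pi/14) by ring, Real.sin_two_mul,
      sin_pi_div_fourteen_poly, ← hcdef]
  have hC : Real.cos (3 * Real.pi/14) = 4 * c ^ 3 - 3 * c := by
    rw [show 3 * Real.pi/14 = 3 * (Real.pi/14) by ring, Real.cos_three_mul, ← hcdef]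
  have h47 : 2 / Real.sqrt 7 * (2 / Real.sqrt 7) = 4 / 7 := by
    rw [div_mul_div_comm, Real.mul_self_sqrt (by norm_num)]
    norm_num
  show (2/Real.sqrt 7) •
      !![Real.sin (Real.pi/7), c, Real.cos (3*Real.pi/14);
        c, -Real.cos (3*Real.pi/14), Real.sin (Real.pi/7);
        Real.cos (3*Real.pi/14), Real.sin (Real.pi/7), -c] *
      ((2/Real.sqrt 7) •
      !![Real.sin (Real.pi/7), c, Real.cos (3*Real.pi/14);
        c, -Real.cos (3*Real.pi/14), Real.sin (Real.pi/7);
        Real.cos (3*Real.pi/14), Real.sin (Real.pi/7), -c]) = 1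
  rw [Matrix.smul_mul, Matrix.mul_smul, smul_smul, h47, hA, hC]
  ext i j
  fin_cases i <;> fin_cases j <;>
    simp [Matrix.mul_apply, Fin.sum_univ_three, Matrix.one_apply, Matrix.smul_apply,
      smul_eq_mul] <;>
    first
      | linear_combination (4 * c ^ 4 - c ^ 2) * hp
      | linear_combination (-(4 * c ^ 4) + c ^ 2) * hp
      | linear_combination (16/7 * c ^ 4 - 4/7 * c ^ 2) * hp
      | linear_combination (-(16/7 * c ^ 4) + 4/7 * c ^ 2) * hp
      | linear_combination (256/7 * c ^ 8 - 320/7 * c ^ 6 + 80/7 * c ^ 4 + 1/7) * hp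
end

section
/- Let S = (2/√7)·[[sin(π/7), cos(π/14), cos(3π/14)], [cos(π/14), −cos(3π/14), sin(π/7)], [cos(3π/14), sin(π/7), −cos(π/14)]] and define Verlinde numbers N_{abc} := ∑_{j=0}^{2} S_{aj}·S_{bj}·S_{cj} / S_{0j} for a,b,c ∈ {0,1,2} (indices starting at 0, with 0 the vacuum). Then N_{111} = 1, N_{112} = 1, N_{122} = 1, and N_{222} = 0. -/
/-!
`S = (2/√7) M` with `M a j = sin ((2a+1)(2j+1)π/7)`, the integer-spin block of the `SU(2)`
level-5 S-matrix. `M Mᵀ = (7/4) I`, because `∑ⱼ cos (2m(2j+1)π/7) = -1/2` for `7 ∤ m`, so `S` is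
orthogonal. Each column of `M` obeys the Clebsch–Gordan rule for `SU(2)` characters,
`sin((2a+1)x) sin((2b+1)x) = sin x ∑_c sin((2c+1)x)`, truncated by `sin 7x = 0` and
`sin 9x = -sin 5x`; so the ratios `S a j / S 0 j` multiply according to the fusion rules. For an
orthogonal `S` with this property, the Verlinde sum returns exactly the fusion coefficients.
-/

open Real Finset
open scoped Matrix

theorem Matrix.sum_mul_mul_div_eq_of_fusion {ι 𝕜 : Type*} [Fintype ι] [DecidableEq ι] [Field 𝕜]
    {S : Matrix ι ι 𝕜} (hS : S * Sᵀ = 1) {o a b : ι} (hS₀ : ∀ j, S o j ≠ 0) {n : ι → 𝕜}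
    (hfus : ∀ j, S a j * S b j = S o j * ∑ d, n d * S d j) (c : ι) :
    ∑ j, S a j * S b j * S c j / S o j = n c := by
  calc ∑ j, S a j * S b j * S c j / S o j = ∑ j, (∑ d, n d * S d j) * S c j := by
        refine sum_congr rfl fun j _ => ?_
        rw [hfus, mul_comm (S o j), mul_assoc, mul_div_assoc, mul_div_cancel_left₀ _ (hS₀ j)]
    _ = ∑ d, n d * (S * Sᵀ) d c := by
        simp only [Matrix.mul_apply, Matrix.transpose_apply, sum_mul, mul_sum, mul_assoc]
        exact sum_comm
    _ = n c := by simp [hS, Matrix.one_apply]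

theorem Matrix.smul_fusion {ι 𝕜 : Type*} [Fintype ι] [Field 𝕜] {S : Matrix ι ι 𝕜} {o a b : ι}
    {n : ι → 𝕜} (hfus : ∀ j, S a j * S b j = S o j * ∑ d, n d * S d j) (k : 𝕜) (j : ι) :
    (k • S) a j * (k • S) b j = (k • S) o j * ∑ d, n d * (k • S) d j := by
  simp only [Matrix.smul_apply, smul_eq_mul, mul_left_comm (n _) k, ← mul_sum]
  linear_combination k ^ 2 * hfus j

theorem sin_mul_sin_eq_sin_mul_sum (x : ℝ) (a m : ℕ) :
    sin ((2 * a + 1) * x) * sin ((2 * (a + m) + 1) * x) =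
      sin x * ∑ i ∈ range (2 * a + 1), sin ((2 * (m + i) + 1) * x) := by
  have telescope := sum_range_sub' (fun i : ℕ => cos (2 * (m + i) * x)) (2 * a + 1)
  have term (i : ℕ) : 2 * sin x * sin ((2 * (m + i) + 1) * x) =
      cos (2 * (m + i) * x) - cos (2 * (m + (i + 1 : ℕ)) * x) := by
    rw [two_mul_sin_mul_sin, ← cos_neg]
    push_cast
    ring_nf
  apply mul_left_cancel₀ (two_ne_zero (α := ℝ))
  rw [← mul_assoc, ← mul_assoc, mul_sum, two_mul_sin_mul_sin, ← cos_neg]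
  simp only [term, telescope]
  push_cast
  ring_nf

theorem two_mul_sin_mul_sum_cos (φ : ℝ) (n : ℕ) :
    2 * sin (2 * φ) * ∑ j ∈ range n, cos ((4 * j + 2) * φ) = sin (4 * n * φ) := by
  have telescope := sum_range_sub (fun j : ℕ => sin (4 * j * φ)) n
  have term (j : ℕ) : 2 * sin (2 * φ) * cos ((4 * j + 2) * φ) =
      sin (4 * (j + 1 : ℕ) * φ) - sin (4 * j * φ) := by
    rw [two_mul_sin_mul_cos, ← neg_neg (2 * φ - (4 * j + 2) * φ), sin_neg]
    push_cast
    ring_nf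
  simp only [mul_sum, term, telescope]
  simp

noncomputable def heptAngle (j : ℕ) : ℝ := (2 * j + 1) * π / 7

theorem sum_cos_heptAngle (m : ℤ) (hm : ¬ (7 : ℤ) ∣ m) :
    ∑ j ∈ range 3, cos (2 * m * heptAngle j) = -1 / 2 := by
  set φ : ℝ := m * π / 7
  have hφ : sin (2 * φ) ≠ 0 := by
    rw [Ne, sin_eq_zero_iff]
    rintro ⟨n, hn⟩
    have hπ : (7 * n : ℝ) * π = 2 * m * π := by
      simp only [φ] at hn
      linarith
    have : 7 * n = 2 * m := by exact_mod_cast mul_right_cancel₀ pi_ne_zero hπ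
    omega
  have h := two_mul_sin_mul_sum_cos φ 3
  have h12 : sin (4 * (3 : ℕ) * φ) = -sin (2 * φ) := by
    rw [← sin_int_mul_two_pi_sub _ m]
    congr 1
    simp only [φ]
    push_cast
    ring
  have hsum : ∑ j ∈ range 3, cos (2 * m * heptAngle j) =
      ∑ j ∈ range 3, cos ((4 * j + 2) * φ) := by
    refine sum_congr rfl fun j _ => ?_
    simp only [heptAngle, φ]
    ring_nf
  rw [hsum]
  apply mul_left_cancel₀ (mul_ne_zero two_ne_zero hφ)
  rw [h, h12]
  ring

theorem sum_sin_mul_sin_heptAngle {a c : ℕ} (ha : a < 3) (hc : c < 3) :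
    ∑ j ∈ range 3, sin ((2 * a + 1) * heptAngle j) * sin ((2 * c + 1) * heptAngle j) =
      if a = c then 7 / 4 else 0 := by
  have product (j : ℕ) : sin ((2 * a + 1) * heptAngle j) * sin ((2 * c + 1) * heptAngle j) =
      (cos (2 * ((a - c : ℤ) : ℝ) * heptAngle j) -
        cos (2 * ((a + c + 1 : ℤ) : ℝ) * heptAngle j)) / 2 := by
    rw [eq_div_iff two_ne_zero, mul_comm, ← mul_assoc, two_mul_sin_mul_sin]
    push_cast
    ring_nf
  simp only [product, ← sum_div, sum_sub_distrib, sum_cos_heptAngle (a + c + 1) (by omega)]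
  split_ifs with h
  · subst h
    norm_num
  · rw [sum_cos_heptAngle (a - c) (by omega)]
    norm_num

theorem sin_seven_mul_heptAngle (j : ℕ) : sin (7 * heptAngle j) = 0 := by
  rw [← sin_nat_mul_pi (2 * j + 1)]
  congr 1
  simp only [heptAngle]
  push_cast
  ring

theorem sin_nine_mul_heptAngle (j : ℕ) : sin (9 * heptAngle j) = -sin (5 * heptAngle j) := by
  rw [← sin_nat_mul_two_pi_sub _ (2 * j + 1)]
  congr 1
  simp only [heptAngle]
  push_cast
  ring

theorem sin_heptAngle_pos {j : ℕ} (hj : j < 3) : 0 < sin (heptAngle j) := by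
  have hj' : (j : ℝ) ≤ 2 := by exact_mod_cast Nat.le_of_lt_succ hj
  apply sin_pos_of_pos_of_lt_pi <;> unfold heptAngle
  · positivity
  · nlinarith [pi_pos]

noncomputable def heptSinMatrix : Matrix (Fin 3) (Fin 3) ℝ :=
  Matrix.of fun a j => sin ((2 * (a : ℕ) + 1) * heptAngle j)

theorem heptSinMatrix_eq : heptSinMatrix =
    !![sin (π / 7), cos (π / 14), cos (3 * π / 14);
      cos (π / 14), -cos (3 * π / 14), sin (π / 7);
      cos (3 * π / 14), sin (π / 7), -cos (π / 14)] := by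
  ext a j
  fin_cases a <;> fin_cases j <;>
    simp only [heptSinMatrix, heptAngle, Matrix.of_apply, Matrix.cons_val', Matrix.cons_val,
      Matrix.cons_val_fin_one, Matrix.cons_val_zero, Matrix.cons_val_one, Fin.zero_eta, Fin.mk_one,
      Fin.reduceFinMk, Fin.isValue, Fin.val_zero, Fin.val_one, Fin.val_two, ← sin_pi_div_two_sub,
      ← sin_neg] <;>
    rw [sin_eq_sin_iff]
  exacts [⟨0, .inl (by push_cast; ring)⟩, ⟨0, .inl (by push_cast; ring)⟩,
    ⟨0, .inr (by push_cast; ring)⟩, ⟨0, .inl (by push_cast; ring)⟩,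
    ⟨0, .inr (by push_cast; ring)⟩, ⟨-1, .inl (by push_cast; ring)⟩,
    ⟨0, .inr (by push_cast; ring)⟩, ⟨-1, .inl (by push_cast; ring)⟩,
    ⟨-2, .inl (by push_cast; ring)⟩]

theorem heptSinMatrix_mul_transpose : heptSinMatrix * heptSinMatrixᵀ = (7 / 4 : ℝ) • 1 := by
  ext a c
  simp only [Matrix.mul_apply, Matrix.transpose_apply, heptSinMatrix, Matrix.of_apply]
  rw [Fin.sum_univ_eq_sum_range
    (fun j => sin ((2 * (a : ℕ) + 1) * heptAngle j) * sin ((2 * (c : ℕ) + 1) * heptAngle j)),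
    sum_sin_mul_sin_heptAngle a.isLt c.isLt]
  simp [Matrix.one_apply, Fin.val_inj]

-- `fusionCoeff a b c = N_{ab}^c`: `φ₁ × φ₁ = 1 + φ₁ + φ₂`, `φ₁ × φ₂ = φ₁ + φ₂`, `φ₂ × φ₂ = 1 + φ₁`.
def fusionCoeff : Fin 3 → Fin 3 → Fin 3 → ℝ :=
  ![![![1, 0, 0], ![0, 1, 0], ![0, 0, 1]],
    ![![0, 1, 0], ![1, 1, 1], ![0, 1, 1]],
    ![![0, 0, 1], ![0, 1, 1], ![1, 1, 0]]]

theorem sin_odd_mul_fusion {x : ℝ} (h7 : sin (7 * x) = 0) (h9 : sin (9 * x) = -sin (5 * x))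
    (a b : Fin 3) :
    sin ((2 * (a : ℕ) + 1) * x) * sin ((2 * (b : ℕ) + 1) * x) =
      sin x * ∑ d, fusionCoeff a b d * sin ((2 * (d : ℕ) + 1) * x) := by
  have cg11 : sin (3 * x) * sin (3 * x) = sin x * (sin x + sin (3 * x) + sin (5 * x)) := by
    have h := sin_mul_sin_eq_sin_mul_sum x 1 0
    norm_num [sum_range_succ] at h
    exact h
  have cg12 : sin (3 * x) * sin (5 * x) = sin x * (sin (3 * x) + sin (5 * x) + sin (7 * x)) := by
    have h := sin_mul_sin_eq_sin_mul_sum x 1 1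
    norm_num [sum_range_succ] at h
    exact h
  have cg22 : sin (5 * x) * sin (5 * x) =
      sin x * (sin x + sin (3 * x) + sin (5 * x) + sin (7 * x) + sin (9 * x)) := by
    have h := sin_mul_sin_eq_sin_mul_sum x 2 0
    norm_num [sum_range_succ] at h
    exact h
  fin_cases a <;> fin_cases b <;>
    simp only [fusionCoeff, Fin.sum_univ_three, Matrix.cons_val', Matrix.cons_val,
      Matrix.cons_val_fin_one, Matrix.cons_val_zero, Matrix.cons_val_one, Fin.zero_eta, Fin.mk_one,
      Fin.reduceFinMk, Fin.isValue, Fin.val_zero, Fin.val_one, Fin.val_two, Nat.cast_zero,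
      Nat.cast_one, Nat.cast_ofNat, zero_mul, one_mul, add_zero, zero_add] <;>
    norm_num only [one_mul]
  · ring
  · exact cg11
  · linear_combination cg12 + sin x * h7
  · ring
  · linear_combination cg12 + sin x * h7
  · linear_combination cg22 + sin x * (h7 + h9)

theorem heptSinMatrix_fusion (a b j : Fin 3) :
    heptSinMatrix a j * heptSinMatrix b j =
      heptSinMatrix 0 j * ∑ d, fusionCoeff a b d * heptSinMatrix d j := by
  simpa [heptSinMatrix] using
    sin_odd_mul_fusion (sin_seven_mul_heptAngle j) (sin_nine_mul_heptAngle j) a b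

theorem verlinde_fusion_33 :
    let S : Matrix (Fin 3) (Fin 3) ℝ :=
      (2/Real.sqrt 7) • !![Real.sin (Real.pi/7), Real.cos (Real.pi/14), Real.cos (3*Real.pi/14);
        Real.cos (Real.pi/14), -Real.cos (3*Real.pi/14), Real.sin (Real.pi/7);
        Real.cos (3*Real.pi/14), Real.sin (Real.pi/7), -Real.cos (Real.pi/14)]
    let N : Fin 3 → Fin 3 → Fin 3 → ℝ :=
      fun a b c => ∑ j : Fin 3, S a j * S b j * S c j / S 0 j
    N 1 1 1 = 1 ∧ N 1 1 2 = 1 ∧ N 1 2 2 = 1 ∧ N 2 2 2 = 0 := by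
  intro S N
  have hS : S = (2 / √7) • heptSinMatrix := by rw [heptSinMatrix_eq]
  have horth : S * Sᵀ = 1 := by
    rw [hS, Matrix.transpose_smul, Matrix.smul_mul, Matrix.mul_smul, heptSinMatrix_mul_transpose,
      smul_smul, smul_smul, div_mul_div_comm, mul_self_sqrt (by norm_num)]
    norm_num
  have hS₀ (j : Fin 3) : S 0 j ≠ 0 := by
    rw [hS, Matrix.smul_apply, smul_eq_mul]
    have hsin : heptSinMatrix 0 j ≠ 0 := by
      simpa [heptSinMatrix] using (sin_heptAngle_pos j.isLt).ne'
    exact mul_ne_zero (by positivity) hsin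
  have verlinde (a b c : Fin 3) : N a b c = fusionCoeff a b c :=
    Matrix.sum_mul_mul_div_eq_of_fusion horth hS₀
      (hS ▸ Matrix.smul_fusion (heptSinMatrix_fusion a b) _) c
  exact ⟨verlinde 1 1 1, verlinde 1 1 2, verlinde 1 2 2, verlinde 2 2 2⟩
end
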